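/- arXiv:1307.6332 — 3 statements merged into one kernel-verified Lean document; each statement's English description precedes it below -/
import Mathlib

section
/- Let g(x) = σ/(x+b) for σ, b > 0. The autocorrelation ρ(h) := (∫₀^∞ g(x+h)g(x) dx) / (∫₀^∞ g(x)² dx) equals (b/h) · log(1 + h/b) for all h > 0. -/
/-!
Both integrals are elementary. By partial fractions, `((x + c)(x + a))⁻¹` has the antiderivative
`(log (x + a) - log (x + c)) / (c - a)`, which vanishes at infinity, and `(x + a)⁻²` has the
antiderivative `-(x + a)⁻¹`. With `a = b`, `c = h + b` the factor `σ²` cancels in the ratio.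
-/

open MeasureTheory Set Filter Topology Real

lemma tendsto_log_add_sub_log_add (a c : ℝ) :
    Tendsto (fun x : ℝ => log (x + a) - log (x + c)) atTop (𝓝 0) := by
  have := (tendsto_log_comp_add_sub_log (a - c)).comp
    (tendsto_atTop_add_const_right atTop c tendsto_id)
  refine this.congr fun x => ?_
  simp only [Function.comp_apply, id]
  ring_nf

lemma integral_Ioi_inv_add_mul_inv_add {a c : ℝ} (ha : 0 < a) (hc : 0 < c) (hac : a ≠ c) :
    ∫ x in Ioi (0:ℝ), (x + c)⁻¹ * (x + a)⁻¹ = log (c / a) / (c - a) := by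
  have hderiv : ∀ x ∈ Ici (0:ℝ), HasDerivAt (fun x => (log (x + a) - log (x + c)) / (c - a))
      ((x + c)⁻¹ * (x + a)⁻¹) x := by
    intro x (hx : 0 ≤ x)
    have hxa : x + a ≠ 0 := by positivity
    have hxc : x + c ≠ 0 := by positivity
    have := ((((hasDerivAt_id x).add_const a).log hxa).sub
      (((hasDerivAt_id x).add_const c).log hxc)).div_const (c - a)
    refine this.congr_deriv ?_
    simp only [id]
    field_simp
    ring
  have hnonneg : ∀ x ∈ Ioi (0:ℝ), 0 ≤ (x + c)⁻¹ * (x + a)⁻¹ := fun x (hx : 0 < x) => by positivity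
  have hlim := (tendsto_log_add_sub_log_add a c).div_const (c - a)
  rw [integral_Ioi_of_hasDerivAt_of_nonneg' hderiv hnonneg (by simpa using hlim),
    log_div hc.ne' ha.ne']
  simp only [zero_add]
  ring

lemma integral_Ioi_inv_add_sq {a : ℝ} (ha : 0 < a) :
    ∫ x in Ioi (0:ℝ), (x + a)⁻¹ ^ 2 = a⁻¹ := by
  have hderiv : ∀ x ∈ Ici (0:ℝ), HasDerivAt (fun x => -(x + a)⁻¹) ((x + a)⁻¹ ^ 2) x := by
    intro x (hx : 0 ≤ x)
    have hxa : x + a ≠ 0 := by positivity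
    refine (((hasDerivAt_id x).add_const a).inv hxa).neg.congr_deriv ?_
    simp only [id]
    field_simp
  have hnonneg : ∀ x ∈ Ioi (0:ℝ), 0 ≤ (x + a)⁻¹ ^ 2 := fun x _ => sq_nonneg _
  have hlim : Tendsto (fun x : ℝ => -(x + a)⁻¹) atTop (𝓝 0) := by
    simpa using (tendsto_inv_atTop_zero.comp (tendsto_atTop_add_const_right atTop a tendsto_id)).neg
  rw [integral_Ioi_of_hasDerivAt_of_nonneg' hderiv hnonneg hlim]
  simp

theorem bjerksund_kernel_autocorrelation (σ b h : ℝ) (hσ : 0 < σ) (hb : 0 < b)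
    (hh : 0 < h) :
    (∫ x in Ioi (0:ℝ), (σ / (x + h + b)) * (σ / (x + b))) /
        (∫ x in Ioi (0:ℝ), (σ / (x + b)) ^ 2)
      = (b / h) * Real.log (1 + h / b) := by
  have hnum : ∫ x in Ioi (0:ℝ), (σ / (x + h + b)) * (σ / (x + b))
      = σ ^ 2 * (log ((h + b) / b) / h) := by
    have := integral_Ioi_inv_add_mul_inv_add hb (add_pos hh hb) (by linarith)
    rw [add_sub_cancel_right] at this
    rw [← this, ← integral_const_mul]
    congr 1 with x
    ring
  have hden : ∫ x in Ioi (0:ℝ), (σ / (x + b)) ^ 2 = σ ^ 2 * b⁻¹ := by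
    rw [← integral_Ioi_inv_add_sq hb, ← integral_const_mul]
    congr 1 with x
    ring
  rw [hnum, hden, one_add_div hb.ne', add_comm b h]
  field_simp
end

section
/- For ν > 1/2, λ > 0 and h > 0, ∫₀^∞ (t(t+h))^{ν−1} e^{−λt} dt = (1/√π) · (h/λ)^{ν−1/2} · e^{λh/2} · Γ(ν) · K_{1/2−ν}(λh/2), where K_μ denotes the modified Bessel function of the third kind. -/
open MeasureTheory Set Real

/-- The modified Bessel function of the third kind (Basset's integral
representation): `K_μ(x) = ∫₀^∞ exp(-x cosh t) cosh(μ t) dt` for `x > 0`. -/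
noncomputable def besselK (μ x : ℝ) : ℝ :=
  ∫ t in Ioi (0:ℝ), Real.exp (-x * Real.cosh t) * Real.cosh (μ * t)

/-!
The substitution `t = (h/2)(√(1+r) - 1)` turns the integral into
`∫ r^(ν-1) (1+r)^(-1/2) e^(-x√(1+r)) dr` with `x = λh/2`. Up to a factor `√π`, the function
`(1+r)^(-1/2) e^(-x√(1+r))` is the Laplace transform at `1 + r` of `t^(-1/2) e^(-x²/(4t))`
(a Gaussian integral in disguise, by the Cauchy–Schlömilch substitution). Fubini against the
Gamma integral in `r` then leaves `Γ(ν) ∫ t^(-ν-1/2) e^(-t-x²/(4t)) dt`, and the substitutions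
`t = (x/2) u`, `u = e^s` identify this with `K_(ν-1/2)(x) = K_(1/2-ν)(x)`.
-/

section CauchySchlomilch

variable {p q : ℝ}

lemma hasDerivAt_mul_sub_div (p q : ℝ) {s : ℝ} (hs : s ≠ 0) :
    HasDerivAt (fun s => p * s - q / s) (p + q / s ^ 2) s := by
  have h := ((hasDerivAt_id s).const_mul p).sub ((hasDerivAt_inv hs).const_mul q)
  simp only [id, mul_one, mul_neg, sub_neg_eq_add, ← div_eq_mul_inv] at h
  exact h

lemma strictMonoOn_mul_sub_div (hp : 0 < p) (hq : 0 < q) :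
    StrictMonoOn (fun s => p * s - q / s) (Ioi 0) := by
  intro x hx y _ hxy
  have := div_lt_div_of_pos_left hq hx hxy
  have := mul_lt_mul_of_pos_left hxy hp
  dsimp only
  linarith

lemma image_mul_sub_div_Ioi (hp : 0 < p) (hq : 0 < q) :
    (fun s => p * s - q / s) '' Ioi 0 = univ := by
  refine eq_univ_of_forall fun u => ?_
  -- the positive root of `p s² - u s - q = 0`
  obtain ⟨R, hR0, hR⟩ : ∃ R, 0 ≤ R ∧ R ^ 2 = u ^ 2 + 4 * p * q :=
    ⟨_, sqrt_nonneg _, sq_sqrt (by positivity)⟩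
  have huR : 0 < u + R := by nlinarith [mul_pos hp hq]
  refine ⟨(u + R) / (2 * p), div_pos huR (by positivity), ?_⟩
  field_simp
  linear_combination hR

lemma integrableOn_deriv_mul_exp_neg_sq_mul_sub_div (hp : 0 < p) (hq : 0 < q) :
    IntegrableOn (fun s => (p + q / s ^ 2) * exp (-(p * s - q / s) ^ 2)) (Ioi 0) := by
  have := integrableOn_image_iff_integrableOn_abs_deriv_smul measurableSet_Ioi
    (fun s hs => (hasDerivAt_mul_sub_div p q (ne_of_gt hs)).hasDerivWithinAt)
    (strictMonoOn_mul_sub_div hp hq).injOn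
    (fun u => exp (-u ^ 2))
  rw [image_mul_sub_div_Ioi hp hq, integrableOn_univ] at this
  refine (this.1 (by simpa using integrable_exp_neg_mul_sq one_pos)).congr_fun
    (fun s hs => ?_) measurableSet_Ioi
  have : 0 < s := hs
  simp only [smul_eq_mul, abs_of_pos (by positivity : 0 < p + q / s ^ 2)]

lemma integral_deriv_mul_exp_neg_sq_mul_sub_div (hp : 0 < p) (hq : 0 < q) :
    ∫ s in Ioi 0, (p + q / s ^ 2) * exp (-(p * s - q / s) ^ 2) = √π := by
  have := integral_image_eq_integral_abs_deriv_smul measurableSet_Ioi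
    (fun s hs => (hasDerivAt_mul_sub_div p q (ne_of_gt hs)).hasDerivWithinAt)
    (strictMonoOn_mul_sub_div hp hq).injOn
    (fun u => exp (-u ^ 2))
  rw [image_mul_sub_div_Ioi hp hq, setIntegral_univ] at this
  rw [← (by simpa using integral_gaussian 1 : ∫ u, exp (-u ^ 2) = √π), this]
  refine setIntegral_congr_fun measurableSet_Ioi fun s hs => ?_
  have : 0 < s := hs
  rw [smul_eq_mul, abs_of_pos (by positivity)]

/-- The reflection `s ↦ q / (p s)` fixes `(p s - q / s) ^ 2` and turns `ds` into
`(q / (p s²)) ds`. -/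
lemma integral_div_sq_mul_exp_neg_sq_mul_sub_div (hp : 0 < p) (hq : 0 < q) :
    ∫ s in Ioi 0, q / s ^ 2 * exp (-(p * s - q / s) ^ 2)
      = p * ∫ s in Ioi 0, exp (-(p * s - q / s) ^ 2) := by
  have hderiv : ∀ w ∈ Ioi (0 : ℝ),
      HasDerivWithinAt (fun w => q / p * w⁻¹) (-(q / p * (w ^ 2)⁻¹)) (Ioi 0) w := fun w hw =>
    (((hasDerivAt_inv (ne_of_gt hw)).const_mul (q / p)).congr_deriv (by ring)).hasDerivWithinAt
  have hinj : InjOn (fun w => q / p * w⁻¹) (Ioi 0) := fun x _ y _ hxy =>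
    inv_injective (mul_left_cancel₀ (by positivity) hxy)
  have himage : (fun w => q / p * w⁻¹) '' Ioi 0 = Ioi 0 := by
    refine Subset.antisymm (image_subset_iff.2 fun w hw => ?_) fun s hs => ?_
    · exact mul_pos (div_pos hq hp) (inv_pos.2 hw)
    · exact ⟨q / p * s⁻¹, mul_pos (div_pos hq hp) (inv_pos.2 hs), by field_simp⟩
  have := integral_image_eq_integral_abs_deriv_smul measurableSet_Ioi hderiv hinj
    (fun s => q / s ^ 2 * exp (-(p * s - q / s) ^ 2))
  rw [himage] at this
  rw [this, ← integral_const_mul]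
  refine setIntegral_congr_fun measurableSet_Ioi fun w hw => ?_
  have : 0 < w := hw
  rw [smul_eq_mul, abs_neg, abs_of_pos (by positivity)]
  have hsq : (p * (q / p * w⁻¹) - q / (q / p * w⁻¹)) ^ 2 = (p * w - q / w) ^ 2 := by
    field_simp; ring
  rw [hsq]
  field_simp

lemma integral_exp_neg_sq_mul_sub_div (hp : 0 < p) (hq : 0 < q) :
    ∫ s in Ioi 0, exp (-(p * s - q / s) ^ 2) = √π / (2 * p) := by
  have hint := integrableOn_deriv_mul_exp_neg_sq_mul_sub_div hp hq
  have hint' : IntegrableOn (fun s => p * exp (-(p * s - q / s) ^ 2)) (Ioi 0) := by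
    refine hint.mono' (by fun_prop) ((ae_restrict_iff' measurableSet_Ioi).2 (ae_of_all _ ?_))
    intro s hs
    have : 0 ≤ q / s ^ 2 := by positivity
    rw [norm_of_nonneg (by positivity)]
    gcongr
    linarith
  have hsplit := integral_sub hint hint'
  simp only [← sub_mul, add_sub_cancel_left] at hsplit
  rw [integral_div_sq_mul_exp_neg_sq_mul_sub_div hp hq,
    integral_deriv_mul_exp_neg_sq_mul_sub_div hp hq, integral_const_mul] at hsplit
  rw [eq_div_iff (by positivity)]
  linarith

end CauchySchlomilch

/-- The substitution `t = s²` turns the exponent into `-(√a s - √b / s)² - 2 √(a b)`. -/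
lemma integral_rpow_neg_half_mul_exp_neg_mul_sub_div {a b : ℝ} (ha : 0 < a) (hb : 0 < b) :
    ∫ t in Ioi 0, t ^ (-(1 / 2 : ℝ)) * exp (-(a * t) - b / t)
      = √(π / a) * exp (-(2 * √(a * b))) := by
  rw [← integral_comp_rpow_Ioi_of_pos two_pos]
  have hintegrand : ∀ s ∈ Ioi (0 : ℝ),
      (2 * s ^ ((2 : ℝ) - 1)) • ((s ^ (2 : ℝ)) ^ (-(1 / 2 : ℝ)) *
          exp (-(a * s ^ (2 : ℝ)) - b / s ^ (2 : ℝ)))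
        = 2 * exp (-(2 * √(a * b))) * exp (-(√a * s - √b / s) ^ 2) := by
    intro s hs
    have hs : 0 < s := hs
    have hroot : (s ^ (2 : ℝ)) ^ (-(1 / 2 : ℝ)) = s⁻¹ := by
      rw [← rpow_mul hs.le, ← rpow_neg_one]; norm_num
    have hexp : -(a * s ^ (2 : ℝ)) - b / s ^ (2 : ℝ)
        = -(√a * s - √b / s) ^ 2 + -(2 * √(a * b)) := by
      rw [rpow_two, sqrt_mul ha.le]
      field_simp
      linear_combination (s ^ 4) * sq_sqrt ha.le + sq_sqrt hb.le
    rw [smul_eq_mul, hroot, hexp, exp_add]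
    norm_num
    field_simp
  rw [setIntegral_congr_fun measurableSet_Ioi hintegrand, integral_const_mul,
    integral_exp_neg_sq_mul_sub_div (sqrt_pos.2 ha) (sqrt_pos.2 hb), sqrt_div' π ha.le]
  field_simp

lemma integrableOn_rpow_mul_exp_neg_mul {s b : ℝ} (hs : -1 < s) (hb : 0 < b) :
    IntegrableOn (fun r : ℝ => r ^ s * exp (-(b * r))) (Ioi 0) := by
  simpa using integrableOn_rpow_mul_exp_neg_mul_rpow hs one_pos hb

lemma integral_rpow_mul_integral_mul_exp_neg_mul {ν : ℝ} (hν : 0 < ν) {g : ℝ → ℝ}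
    (hg : Measurable g) (hgi : IntegrableOn (fun t => t ^ (-ν) * g t) (Ioi 0)) :
    ∫ r in Ioi 0, r ^ (ν - 1) * ∫ t in Ioi 0, g t * exp (-(r * t))
      = Gamma ν * ∫ t in Ioi 0, t ^ (-ν) * g t := by
  set F : ℝ → ℝ → ℝ := fun r t => r ^ (ν - 1) * (g t * exp (-(r * t)))
  have hgamma : ∀ t ∈ Ioi (0 : ℝ), ∫ r in Ioi 0, r ^ (ν - 1) * exp (-(t * r))
      = Gamma ν * t ^ (-ν) := fun t ht => by
    rw [integral_rpow_mul_exp_neg_mul_Ioi hν ht, one_div, inv_rpow (le_of_lt ht),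
      ← rpow_neg (le_of_lt ht), mul_comm]
  have hF : ∀ t ∈ Ioi (0 : ℝ),
      (fun r => F r t) = fun r => g t * (r ^ (ν - 1) * exp (-(t * r))) :=
    fun t _ => funext fun r => by simp only [F]; ring_nf
  have hFint : Integrable (Function.uncurry F)
      ((volume.restrict (Ioi 0)).prod (volume.restrict (Ioi 0))) := by
    refine (integrable_prod_iff' (by fun_prop)).2 ⟨?_, ?_⟩
    · refine (ae_restrict_iff' measurableSet_Ioi).2 (ae_of_all _ fun t ht => ?_)
      simp only [Function.uncurry_apply_pair, hF t ht]
      exact (integrableOn_rpow_mul_exp_neg_mul (by linarith) ht).const_mul (g t)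
    · refine (hgi.norm.const_mul (Gamma ν)).congr ?_
      refine (ae_restrict_iff' measurableSet_Ioi).2 (ae_of_all _ fun t ht => ?_)
      have hnorm : ∀ r ∈ Ioi (0 : ℝ),
          ‖Function.uncurry F (r, t)‖ = ‖g t‖ * (r ^ (ν - 1) * exp (-(t * r))) :=
          fun r hr => by
        simp only [Function.uncurry_apply_pair, congrFun (hF t ht) r, norm_mul,
          norm_of_nonneg (rpow_nonneg (le_of_lt hr) _), norm_of_nonneg (exp_pos _).le]
      dsimp only
      rw [setIntegral_congr_fun measurableSet_Ioi hnorm, integral_const_mul, hgamma t ht,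
        norm_mul, norm_of_nonneg (rpow_nonneg (le_of_lt ht) _)]
      ring
  calc ∫ r in Ioi 0, r ^ (ν - 1) * ∫ t in Ioi 0, g t * exp (-(r * t))
      = ∫ r in Ioi 0, ∫ t in Ioi 0, F r t := by simp only [F, integral_const_mul]
    _ = ∫ t in Ioi 0, ∫ r in Ioi 0, F r t := integral_integral_swap hFint
    _ = ∫ t in Ioi 0, Gamma ν * (t ^ (-ν) * g t) := by
        refine setIntegral_congr_fun measurableSet_Ioi fun t ht => ?_
        simp only [hF t ht, integral_const_mul, hgamma t ht]
        ring
    _ = Gamma ν * ∫ t in Ioi 0, t ^ (-ν) * g t := integral_const_mul _ _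

lemma integrableOn_Ioi_one_rpow_mul_exp_neg_mul_sub_div (s : ℝ) {a b : ℝ} (ha : 0 < a)
    (hb : 0 ≤ b) : IntegrableOn (fun u => u ^ s * exp (-(a * u) - b / u)) (Ioi 1) := by
  refine ((integrableOn_rpow_mul_exp_neg_mul (s := |s|) (by linarith [abs_nonneg s]) ha).mono_set
    (Ioi_subset_Ioi zero_le_one)).mono' (by fun_prop)
    ((ae_restrict_iff' measurableSet_Ioi).2 (ae_of_all _ fun u hu => ?_))
  have hu : 1 < u := hu
  rw [norm_of_nonneg (by positivity)]
  have : 0 ≤ b / u := by positivity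
  gcongr ?_ * exp ?_
  · exact rpow_le_rpow_of_exponent_le hu.le (le_abs_self s)
  · linarith

lemma image_inv_Ioi_one : (fun u : ℝ => u⁻¹) '' Ioi 1 = Ioo 0 1 := by
  simpa using inv_Ioi₀ (zero_lt_one' ℝ)

lemma hasDerivWithinAt_inv_Ioi_one :
    ∀ w ∈ Ioi (1 : ℝ), HasDerivWithinAt (fun u : ℝ => u⁻¹) (-(w ^ 2)⁻¹) (Ioi 1) w :=
  fun w hw => (hasDerivAt_inv (by linarith [mem_Ioi.1 hw])).hasDerivWithinAt

lemma integral_Ioo_zero_one_eq_integral_Ioi_one_comp_inv (g : ℝ → ℝ) :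
    ∫ u in Ioo 0 1, g u = ∫ w in Ioi 1, (w ^ 2)⁻¹ * g w⁻¹ := by
  rw [← image_inv_Ioi_one, integral_image_eq_integral_abs_deriv_smul measurableSet_Ioi
    hasDerivWithinAt_inv_Ioi_one inv_injective.injOn]
  simp only [smul_eq_mul, abs_neg, abs_inv, abs_pow, sq_abs]

lemma integrableOn_Ioo_zero_one_iff_comp_inv (g : ℝ → ℝ) :
    IntegrableOn g (Ioo 0 1) ↔ IntegrableOn (fun w => (w ^ 2)⁻¹ * g w⁻¹) (Ioi 1) := by
  rw [← image_inv_Ioi_one, integrableOn_image_iff_integrableOn_abs_deriv_smul measurableSet_Ioi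
    hasDerivWithinAt_inv_Ioi_one inv_injective.injOn]
  simp only [smul_eq_mul, abs_neg, abs_inv, abs_pow, sq_abs]

lemma inv_sq_mul_rpow_inv_mul_exp {w : ℝ} (hw : 0 < w) (s a b : ℝ) :
    (w ^ 2)⁻¹ * (w⁻¹ ^ s * exp (-(a * w⁻¹) - b / w⁻¹))
      = w ^ (-s - 2) * exp (-(b * w) - a / w) := by
  rw [inv_rpow hw.le, ← rpow_neg hw.le, ← rpow_two, ← rpow_neg hw.le, ← mul_assoc,
    ← rpow_add hw, div_inv_eq_mul, ← div_eq_mul_inv]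
  ring_nf

lemma integrableOn_rpow_mul_exp_neg_mul_sub_div (s : ℝ) {a b : ℝ} (ha : 0 < a) (hb : 0 < b) :
    IntegrableOn (fun u => u ^ s * exp (-(a * u) - b / u)) (Ioi 0) := by
  rw [← Ioo_union_Ici_eq_Ioi one_pos, integrableOn_union, integrableOn_Ici_iff_integrableOn_Ioi,
    integrableOn_Ioo_zero_one_iff_comp_inv]
  refine ⟨?_, integrableOn_Ioi_one_rpow_mul_exp_neg_mul_sub_div s ha hb.le⟩
  refine (integrableOn_Ioi_one_rpow_mul_exp_neg_mul_sub_div (-s - 2) hb ha.le).congr_fun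
    (fun w hw => ?_) measurableSet_Ioi
  exact (inv_sq_mul_rpow_inv_mul_exp (by linarith [mem_Ioi.1 hw]) s a b).symm

lemma besselK_neg (μ x : ℝ) : besselK (-μ) x = besselK μ x := by
  simp only [besselK, neg_mul, cosh_neg]

lemma besselK_eq_integral_Ioi_one (μ x : ℝ) :
    besselK μ x = ∫ u in Ioi 1,
      (u ^ (μ - 1) + u ^ (-μ - 1)) / 2 * exp (-(x / 2 * u) - x / 2 / u) := by
  have h := integral_comp_exp_Ioi
    (fun u => (u ^ (μ - 1) + u ^ (-μ - 1)) / 2 * exp (-(x / 2 * u) - x / 2 / u)) 0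
  rw [exp_zero] at h
  rw [← h, besselK]
  refine setIntegral_congr_fun measurableSet_Ioi fun t _ => ?_
  have hpow : ∀ c : ℝ, exp t ^ (c - 1) = exp (c * t) * (exp t)⁻¹ := fun c => by
    rw [← exp_mul, ← exp_neg, ← exp_add]; ring_nf
  have hcosh : -x * cosh t = -(x / 2 * exp t) - x / 2 / exp t := by
    rw [cosh_eq, exp_neg]; ring
  rw [smul_eq_mul, hpow, hpow, ← hcosh, cosh_eq (μ * t), ← neg_mul]
  field_simp

lemma integral_rpow_mul_exp_neg_mul_sub_div_eq_besselK (μ : ℝ) {x : ℝ} (hx : 0 < x) :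
    ∫ u in Ioi 0, u ^ (-μ - 1) * exp (-(x / 2 * u) - x / 2 / u) = 2 * besselK μ x := by
  have hx2 : 0 < x / 2 := half_pos hx
  have hint := integrableOn_rpow_mul_exp_neg_mul_sub_div (-μ - 1) hx2 hx2
  have hint' := integrableOn_Ioi_one_rpow_mul_exp_neg_mul_sub_div (μ - 1) hx2 hx2.le
  have hreflect : ∀ w ∈ Ioi (1 : ℝ),
      (w ^ 2)⁻¹ * (w⁻¹ ^ (-μ - 1) * exp (-(x / 2 * w⁻¹) - x / 2 / w⁻¹))
        = w ^ (μ - 1) * exp (-(x / 2 * w) - x / 2 / w) := fun w hw => by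
    rw [inv_sq_mul_rpow_inv_mul_exp (zero_lt_one.trans hw), show -(-μ - 1) - 2 = μ - 1 by ring]
  rw [← Ioo_union_Ici_eq_Ioi one_pos,
    setIntegral_union ((Iio_disjoint_Ici le_rfl).mono_left Ioo_subset_Iio_self) measurableSet_Ici
      (hint.mono_set Ioo_subset_Ioi_self) (hint.mono_set (Ici_subset_Ioi.2 one_pos)),
    integral_Ici_eq_integral_Ioi, integral_Ioo_zero_one_eq_integral_Ioi_one_comp_inv,
    setIntegral_congr_fun measurableSet_Ioi hreflect,
    ← integral_add hint' (hint.mono_set (Ioi_subset_Ioi zero_le_one)),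
    besselK_eq_integral_Ioi_one, ← integral_const_mul]
  refine setIntegral_congr_fun measurableSet_Ioi fun w _ => ?_
  ring_nf

lemma integral_rpow_mul_exp_neg_sub_sq_div_eq_besselK (μ : ℝ) {x : ℝ} (hx : 0 < x) :
    ∫ t in Ioi 0, t ^ (-μ - 1) * exp (-t - (x / 2) ^ 2 / t)
      = 2 * (x / 2) ^ (-μ) * besselK μ x := by
  have hx2 : 0 < x / 2 := half_pos hx
  have h := integral_comp_mul_left_Ioi' (fun t => t ^ (-μ - 1) * exp (-t - (x / 2) ^ 2 / t)) 0 hx2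
  rw [mul_zero] at h
  rw [← h, mul_right_comm, ← integral_rpow_mul_exp_neg_mul_sub_div_eq_besselK μ hx,
    smul_eq_mul,
    ← integral_const_mul, ← integral_mul_const]
  refine setIntegral_congr_fun measurableSet_Ioi fun u hu => ?_
  have hu : 0 < u := hu
  rw [mul_rpow hx2.le hu.le, show (x / 2) ^ 2 / (x / 2 * u) = x / 2 / u by field_simp,
    ← sub_add_cancel (-μ) 1, rpow_add_one hx2.ne', add_sub_cancel_right]
  ring

lemma integral_rpow_mul_inv_sqrt_mul_exp_neg_sqrt {ν x : ℝ} (hν : 0 < ν) (hx : 0 < x) :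
    ∫ r in Ioi 0, r ^ (ν - 1) * ((√(1 + r))⁻¹ * exp (-(x * √(1 + r))))
      = (√π)⁻¹ * Gamma ν *
          ∫ t in Ioi 0, t ^ (-(ν - 1 / 2) - 1) * exp (-t - (x / 2) ^ 2 / t) := by
  set g : ℝ → ℝ := fun t => t ^ (-(1 / 2 : ℝ)) * exp (-t - (x / 2) ^ 2 / t)
  have hlaplace : ∀ r ∈ Ioi (0 : ℝ), (√(1 + r))⁻¹ * exp (-(x * √(1 + r)))
      = (√π)⁻¹ * ∫ t in Ioi 0, g t * exp (-(r * t)) := fun r hr => by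
    have hr : 0 < 1 + r := by linarith [mem_Ioi.1 hr]
    have hexp : ∀ t, g t * exp (-(r * t))
        = t ^ (-(1 / 2 : ℝ)) * exp (-((1 + r) * t) - (x / 2) ^ 2 / t) :=
      fun t => by simp only [g, mul_assoc, ← exp_add]; ring_nf
    simp only [hexp]
    rw [integral_rpow_neg_half_mul_exp_neg_mul_sub_div hr (by positivity), sqrt_div' _ hr.le,
      sqrt_mul hr.le, sqrt_sq (by positivity)]
    field_simp
  have hcombine : ∀ t ∈ Ioi (0 : ℝ), t ^ (-ν) * g t
      = t ^ (-(ν - 1 / 2) - 1) * exp (-(1 * t) - (x / 2) ^ 2 / t) := fun t ht => by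
    rw [one_mul, ← mul_assoc, ← rpow_add ht]
    ring_nf
  have hgi : IntegrableOn (fun t => t ^ (-ν) * g t) (Ioi 0) :=
    (integrableOn_rpow_mul_exp_neg_mul_sub_div _ one_pos (by positivity)).congr_fun
      (fun t ht => (hcombine t ht).symm) measurableSet_Ioi
  rw [setIntegral_congr_fun measurableSet_Ioi fun r hr => congrArg _ (hlaplace r hr)]
  simp only [mul_left_comm _ (√π)⁻¹, integral_const_mul]
  rw [integral_rpow_mul_integral_mul_exp_neg_mul hν (by fun_prop) hgi,
    setIntegral_congr_fun measurableSet_Ioi hcombine]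
  simp only [one_mul, mul_assoc]

lemma integral_mul_add_rpow_mul_exp_eq_integral_sqrt {ν lam h : ℝ} (hh : 0 < h) :
    ∫ t in Ioi 0, (t * (t + h)) ^ (ν - 1) * exp (-lam * t)
      = h / 4 * ((h / 2) ^ 2) ^ (ν - 1) * exp (lam * h / 2) *
          ∫ r in Ioi 0,
            r ^ (ν - 1) * ((√(1 + r))⁻¹ * exp (-(lam * h / 2 * √(1 + r)))) := by
  set φ : ℝ → ℝ := fun r => h / 2 * (√(1 + r) - 1)
  have hderiv : ∀ r ∈ Ioi (0 : ℝ),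
      HasDerivWithinAt φ (h / 4 * (√(1 + r))⁻¹) (Ioi 0) r :=
    fun r hr => by
      have hr : 0 < 1 + r := by linarith [mem_Ioi.1 hr]
      refine ((((hasDerivAt_id r).const_add 1).sqrt hr.ne').sub_const 1 |>.const_mul (h / 2)
        |>.congr_deriv ?_).hasDerivWithinAt
      simp only [id]
      field_simp
      norm_num
  have hmono : StrictMonoOn φ (Ioi 0) := fun r hr s _ hrs => by
    have : 0 < 1 + r := by linarith [mem_Ioi.1 hr]
    simp only [φ]
    gcongr
  have himage : φ '' Ioi 0 = Ioi 0 := by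
    refine Subset.antisymm (image_subset_iff.2 fun r hr => ?_) fun t ht => ?_
    · have : 1 < √(1 + r) := lt_sqrt_of_sq_lt (by linarith [mem_Ioi.1 hr])
      exact mul_pos (half_pos hh) (sub_pos.2 this)
    · have ht : 0 < t := ht
      have : 0 < 2 * t / h := by positivity
      refine ⟨(2 * t / h + 1) ^ 2 - 1, by simp only [mem_Ioi]; nlinarith, ?_⟩
      simp only [φ, add_sub_cancel, sqrt_sq (by positivity : 0 ≤ 2 * t / h + 1)]
      field_simp
      ring
  conv_lhs => rw [← himage]
  rw [integral_image_eq_integral_abs_deriv_smul measurableSet_Ioi hderiv hmono.injOn,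
    ← integral_const_mul]
  refine setIntegral_congr_fun measurableSet_Ioi fun r hr => ?_
  have hr : 0 < r := hr
  have hs : √(1 + r) ^ 2 = 1 + r := sq_sqrt (by linarith)
  have hprod : φ r * (φ r + h) = (h / 2) ^ 2 * r := by
    simp only [φ]; linear_combination (h / 2) ^ 2 * hs
  have hexp : exp (-lam * φ r) = exp (lam * h / 2) * exp (-(lam * h / 2 * √(1 + r))) := by
    rw [← exp_add]; simp only [φ]; ring_nf
  rw [smul_eq_mul, hprod, hexp, mul_rpow (by positivity) hr.le,
    abs_of_pos (by positivity)]
  ring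

theorem gamma_kernel_shifted_product_integral (ν lam h : ℝ) (hν : 1 / 2 < ν)
    (hlam : 0 < lam) (hh : 0 < h) :
    ∫ t in Ioi (0:ℝ), (t * (t + h)) ^ (ν - 1) * Real.exp (-lam * t)
      = (1 / Real.sqrt π) * (h / lam) ^ (ν - 1 / 2) * Real.exp (lam * h / 2) *
          Real.Gamma ν * besselK (1 / 2 - ν) (lam * h / 2) := by
  have hx : 0 < lam * h / 2 := by positivity
  have hconst : h / 4 * ((h / 2) ^ 2) ^ (ν - 1) * (2 * (lam * h / 2 / 2) ^ (-(ν - 1 / 2)))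
      = (h / lam) ^ (ν - 1 / 2) := by
    have hsq : ((h / 2) ^ 2) ^ (ν - 1) = ((h / 2) ^ 2) ^ (ν - 1 / 2) / (h / 2) := by
      rw [show ν - 1 = ν - 1 / 2 - 1 / 2 by ring, rpow_sub (by positivity), ← sqrt_eq_rpow,
        sqrt_sq (by positivity)]
    rw [hsq, rpow_neg (by positivity), show h / lam = (h / 2) ^ 2 / (lam * h / 2 / 2) by
      field_simp, div_rpow (x := (h / 2) ^ 2) (by positivity) (by positivity)]
    field_simp
    norm_num
  rw [integral_mul_add_rpow_mul_exp_eq_integral_sqrt hh,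
    integral_rpow_mul_inv_sqrt_mul_exp_neg_sqrt (by linarith) hx,
    integral_rpow_mul_exp_neg_sub_sq_div_eq_besselK _ hx,
    show 1 / 2 - ν = -(ν - 1 / 2) by ring, besselK_neg, ← hconst]
  ring
end

section
/- Suppose G : {(T,t) : t ≤ T} → (0,∞) is continuously differentiable in its first argument and the ratio G(T,s)/G(t,s) is independent of s for all s ≤ t ≤ T (i.e. equals some function ξ(T,t)). Then G factorizes: there exist functions g₁, g₂ such that G(t,s) = g₁(t) g₂(s); explicitly G(t,s) = G(s,s) exp(∫_s^t ξ_T(u,u) du), where ξ_T denotes the partial derivative of ξ in its first argument. -/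
/-!
Fixing `s`, the identity `G(T,s) = ξ(T,t) G(t,s)` for `T ≥ t` shows that `T ↦ G(T,s)` has right
derivative `ξ_T(t,t) G(t,s)` at every `t ≥ s`, so it solves the linear ODE `y' = ξ_T(·,·) y` on
`[s, ∞)` with initial value `G(s,s)`. Hence `G(t,s) = G(s,s) exp(∫_s^t ξ_T)`, and splitting the
integral at `0` separates the variables.
-/

open Set intervalIntegral

theorem eq_mul_exp_integral_of_hasDerivWithinAt_Ici {f a : ℝ → ℝ} {s t : ℝ} (hst : s ≤ t)
    (ha : Continuous a) (hf : ContinuousOn f (Icc s t))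
    (hderiv : ∀ x ∈ Ico s t, HasDerivWithinAt f (a x * f x) (Ici x) x) :
    f t = f s * Real.exp (∫ u in s..t, a u) := by
  set A : ℝ → ℝ := fun x => ∫ u in s..x, a u
  have hA : ∀ x, HasDerivAt A (a x) x := fun x => (ha.integral_hasStrictDerivAt s x).hasDerivAt
  have hconst : ∀ x ∈ Icc s t, f x * Real.exp (-A x) = f s * Real.exp (-A s) := by
    refine constant_of_has_deriv_right_zero
      (hf.mul (by fun_prop (disch := exact fun x => (hA x).differentiableAt))) fun x hx => ?_
    refine ((hderiv x hx).mul (hA x).neg.exp.hasDerivWithinAt).congr_deriv ?_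
    simp only [Pi.neg_apply]
    ring
  have hAs : A s = 0 := integral_same
  have key := hconst t (right_mem_Icc.2 hst)
  rw [hAs, neg_zero, Real.exp_zero, mul_one] at key
  rw [← key, mul_assoc, ← Real.exp_add, neg_add_cancel, Real.exp_zero, mul_one]

theorem kernel_separation_of_affine_general (G : ℝ → ℝ → ℝ) (ξ : ℝ → ℝ → ℝ) (ξT : ℝ → ℝ)
    (hdiffG : ∀ s t : ℝ, s ≤ t → DifferentiableAt ℝ (fun T => G T s) t)
    (hratio : ∀ T t s : ℝ, s ≤ t → t ≤ T → G T s = ξ T t * G t s)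
    (hξder : ∀ u : ℝ, HasDerivAt (fun T => ξ T u) (ξT u) u)
    (hξTcont : Continuous ξT) :
    (∀ t s : ℝ, s ≤ t → G t s = G s s * Real.exp (∫ u in s..t, ξT u)) ∧
      ∃ g₁ g₂ : ℝ → ℝ, ∀ t s : ℝ, s ≤ t → G t s = g₁ t * g₂ s := by
  have hG' : ∀ s t, s ≤ t → HasDerivWithinAt (fun T => G T s) (ξT t * G t s) (Ici t) t :=
    fun s t hst => ((hξder t).hasDerivWithinAt.mul_const (G t s)).congr
      (fun T hT => hratio T t s hst hT) (hratio t t s hst le_rfl)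
  have hexp : ∀ t s : ℝ, s ≤ t → G t s = G s s * Real.exp (∫ u in s..t, ξT u) :=
    fun t s hst => eq_mul_exp_integral_of_hasDerivWithinAt_Ici hst hξTcont
      (fun x hx => (hdiffG s x hx.1).continuousAt.continuousWithinAt) fun x hx => hG' s x hx.1
  refine ⟨hexp, fun t => Real.exp (∫ u in (0 : ℝ)..t, ξT u),
    fun s => G s s * Real.exp (-∫ u in (0 : ℝ)..s, ξT u), fun t s hst => ?_⟩
  rw [hexp t s hst, ← integral_interval_sub_left (hξTcont.intervalIntegrable 0 t)
    (hξTcont.intervalIntegrable 0 s), sub_eq_add_neg, Real.exp_add]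
  ring

/-- If the kernel ratio `G(T,s)/G(t,s)` is independent of `s`, then the kernel
factorizes multiplicatively, with the explicit exponential representation. -/
theorem kernel_separation_of_affine (G : ℝ → ℝ → ℝ) (ξ : ℝ → ℝ → ℝ) (ξT : ℝ → ℝ)
    (hpos : ∀ t s : ℝ, s ≤ t → 0 < G t s)
    (hdiffG : ∀ s t : ℝ, s ≤ t → DifferentiableAt ℝ (fun T => G T s) t)
    (hratio : ∀ T t s : ℝ, s ≤ t → t ≤ T → G T s = ξ T t * G t s)
    (hξder : ∀ u : ℝ, HasDerivAt (fun T => ξ T u) (ξT u) u)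
    (hξTcont : Continuous ξT) :
    (∀ t s : ℝ, s ≤ t → G t s = G s s * Real.exp (∫ u in s..t, ξT u)) ∧
      ∃ g₁ g₂ : ℝ → ℝ, ∀ t s : ℝ, s ≤ t → G t s = g₁ t * g₂ s :=
  kernel_separation_of_affine_general G ξ ξT hdiffG hratio hξder hξTcont
end
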